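/- arXiv:1601.07854 — 3 statements merged into one kernel-verified Lean document; each statement's English description precedes it below -/
import Mathlib

section
/- If a finite simple graph G has an odd cycle and is 3-colorable (so χ(G) = 3), then for any proper 3-coloring f of G and any transposition π of two colors in {1,2,3}, the colorings f and π∘f cannot be joined by a sequence of proper 3-colorings each differing from the next on exactly one vertex. -/
open SimpleGraph Finset

/-- color map into `ZMod 3` -/
private def gdc (a : Fin 3) : ZMod 3 := (a.val : ZMod 3)

private lemma gdc_inj : Function.Injective gdc := by decide

/-- winding number of a coloring along a closed walk. -/
private noncomputable def gdD {V : Type} {G : SimpleGraph V} {x : V} (w : G.Walk x x)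
    (f : V → Fin 3) : ℤ :=
  ∑ i ∈ Finset.range w.length,
    (((gdc (f (w.getVert (i + 1))) - gdc (f (w.getVert i))).val : ℤ))

private lemma gdD_dvd {V : Type} {G : SimpleGraph V} {x : V} (w : G.Walk x x)
    (f : V → Fin 3) : (3 : ℤ) ∣ gdD w f := by
  have h : ((gdD w f : ℤ) : ZMod 3) = 0 := by
    unfold gdD
    push_cast
    have : ∀ i ∈ Finset.range w.length,
        (((gdc (f (w.getVert (i + 1))) - gdc (f (w.getVert i))).val : ZMod 3))
          = gdc (f (w.getVert (i + 1))) - gdc (f (w.getVert i)) := by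
      intro i _
      exact ZMod.natCast_rightInverse _
    rw [Finset.sum_congr rfl this, Finset.sum_range_sub
      (fun i => gdc (f (w.getVert i))) w.length]
    rw [w.getVert_length, w.getVert_zero]
    ring
  exact (ZMod.intCast_zmod_eq_zero_iff_dvd _ 3).mp h

private lemma gd_term_bounds {a b : Fin 3} (h : a ≠ b) :
    1 ≤ ((gdc b - gdc a).val : ℤ) ∧ ((gdc b - gdc a).val : ℤ) ≤ 2 := by
  revert h; revert a b; decide

/-- injectivity of getVert on walks with nodup support -/
private lemma gd_getVert_inj {V : Type} {G : SimpleGraph V} {u v : V}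
    (p : G.Walk u v) (hp : p.support.Nodup) :
    ∀ i ≤ p.length, ∀ j ≤ p.length, p.getVert i = p.getVert j → i = j := by
  induction p with
  | nil => intro i hi j hj _; simp only [SimpleGraph.Walk.length_nil,
      Nat.le_zero] at hi hj; omega
  | cons h p ih =>
    rw [SimpleGraph.Walk.support_cons, List.nodup_cons] at hp
    obtain ⟨hu, hnd⟩ := hp
    intro i hi j hj hij
    match i, j with
    | 0, 0 => rfl
    | 0, j + 1 =>
      exfalso; apply hu
      rw [SimpleGraph.Walk.mem_support_iff_exists_getVert]
      refine ⟨j, ?_, by simpa using hj⟩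
      simpa [SimpleGraph.Walk.getVert_cons_succ, SimpleGraph.Walk.getVert_zero]
        using hij.symm
    | i + 1, 0 =>
      exfalso; apply hu
      rw [SimpleGraph.Walk.mem_support_iff_exists_getVert]
      refine ⟨i, ?_, by simpa using hi⟩
      simpa [SimpleGraph.Walk.getVert_cons_succ, SimpleGraph.Walk.getVert_zero]
        using hij
    | i + 1, j + 1 =>
      have := ih hnd i (by simpa using hi) j (by simpa using hj)
        (by simpa [SimpleGraph.Walk.getVert_cons_succ] using hij)
      omega

private lemma gd_cycle_inj_hi {V : Type} {G : SimpleGraph V} {x : V}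
    {w : G.Walk x x} (hw : w.IsCycle) :
    ∀ i, 1 ≤ i → i ≤ w.length → ∀ j, 1 ≤ j → j ≤ w.length →
      w.getVert i = w.getVert j → i = j := by
  cases w with
  | nil => exact absurd hw (SimpleGraph.Walk.IsCycle.not_of_nil)
  | cons h p =>
    have hnd : p.support.Nodup := by
      have := hw.support_nodup
      simpa [SimpleGraph.Walk.support_cons] using this
    intro i h1i hin j h1j hjn heq
    obtain ⟨i', rfl⟩ : ∃ i', i = i' + 1 := ⟨i - 1, by omega⟩
    obtain ⟨j', rfl⟩ : ∃ j', j = j' + 1 := ⟨j - 1, by omega⟩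
    have := gd_getVert_inj p hnd i' (by simpa using hin) j' (by simpa using hjn)
      (by simpa [SimpleGraph.Walk.getVert_cons_succ] using heq)
    omega

private lemma gd_cycle_inj_lo {V : Type} {G : SimpleGraph V} {x : V}
    {w : G.Walk x x} (hw : w.IsCycle) :
    ∀ i, i < w.length → ∀ j, j < w.length →
      w.getVert i = w.getVert j → i = j := by
  intro i hi j hj heq
  rcases Nat.eq_zero_or_pos i with hi0 | hi0
  · rcases Nat.eq_zero_or_pos j with hj0 | hj0
    · omega
    · exfalso
      subst hi0
      have hx : w.getVert w.length = w.getVert j :=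
        (w.getVert_length.trans w.getVert_zero.symm).trans heq
      have := gd_cycle_inj_hi hw w.length (by omega) le_rfl j hj0 (by omega) hx
      omega
  · rcases Nat.eq_zero_or_pos j with hj0 | hj0
    · exfalso
      subst hj0
      have hx : w.getVert w.length = w.getVert i :=
        (w.getVert_length.trans w.getVert_zero.symm).trans heq.symm
      have := gd_cycle_inj_hi hw w.length (by omega) le_rfl i hi0 (by omega) hx
      omega
    · exact gd_cycle_inj_hi hw i hi0 (by omega) j hj0 (by omega) heq

/-- the winding number is invariant under recoloring a single vertex. -/
private lemma gdD_step {V : Type} {G : SimpleGraph V} {x : V}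
    {w : G.Walk x x} (hw : w.IsCycle)
    (g g' : V → Fin 3)
    (hg : ∀ a b, G.Adj a b → g a ≠ g b)
    (hg' : ∀ a b, G.Adj a b → g' a ≠ g' b)
    (y : V) (hy : ∀ z, z ≠ y → g z = g' z) :
    gdD w g = gdD w g' := by
  classical
  set n := w.length with hn
  set t : ℕ → ℤ := fun i =>
    ((gdc (g (w.getVert (i + 1))) - gdc (g (w.getVert i))).val : ℤ) with ht
  set t' : ℕ → ℤ := fun i =>
    ((gdc (g' (w.getVert (i + 1))) - gdc (g' (w.getVert i))).val : ℤ) with ht'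
  have hsub : gdD w g - gdD w g' = ∑ i ∈ Finset.range n, (t i - t' i) := by
    rw [Finset.sum_sub_distrib]; rfl
  set T : Finset ℕ := (Finset.range n).filter
    (fun i => w.getVert i = y ∨ w.getVert (i + 1) = y) with hT
  have hTsum : ∑ i ∈ Finset.range n, (t i - t' i) = ∑ i ∈ T, (t i - t' i) := by
    symm
    apply Finset.sum_subset (Finset.filter_subset _ _)
    intro i hi hiT
    rw [Finset.mem_filter] at hiT
    push_neg at hiT
    have h1 : g (w.getVert i) = g' (w.getVert i) := hy _ ((hiT hi).1)
    have h2 : g (w.getVert (i + 1)) = g' (w.getVert (i + 1)) := hy _ ((hiT hi).2)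
    simp [ht, ht', h1, h2]
  have hcard : T.card ≤ 2 := by
    have hsub2 : T ⊆ ((Finset.range n).filter (fun i => w.getVert i = y)) ∪
        ((Finset.range n).filter (fun i => w.getVert (i + 1) = y)) := by
      intro i hi
      rw [Finset.mem_filter] at hi
      rcases hi.2 with h | h
      · exact Finset.mem_union_left _ (Finset.mem_filter.mpr ⟨hi.1, h⟩)
      · exact Finset.mem_union_right _ (Finset.mem_filter.mpr ⟨hi.1, h⟩)
    have hA : ((Finset.range n).filter (fun i => w.getVert i = y)).card ≤ 1 := by
      apply Finset.card_le_one.mpr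
      intro a ha b hb
      rw [Finset.mem_filter, Finset.mem_range] at ha hb
      exact gd_cycle_inj_lo hw a ha.1 b hb.1 (ha.2.trans hb.2.symm)
    have hB : ((Finset.range n).filter (fun i => w.getVert (i + 1) = y)).card ≤ 1 := by
      apply Finset.card_le_one.mpr
      intro a ha b hb
      rw [Finset.mem_filter, Finset.mem_range] at ha hb
      have := gd_cycle_inj_hi hw (a + 1) (by omega) (by omega) (b + 1) (by omega)
        (by omega) (ha.2.trans hb.2.symm)
      omega
    calc T.card ≤ _ := Finset.card_le_card hsub2
      _ ≤ _ := Finset.card_union_le _ _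
      _ ≤ 2 := by omega
  have hbound : |gdD w g - gdD w g'| ≤ 2 := by
    rw [hsub, hTsum]
    calc |∑ i ∈ T, (t i - t' i)| ≤ ∑ i ∈ T, |t i - t' i| :=
          Finset.abs_sum_le_sum_abs _ _
      _ ≤ ∑ _i ∈ T, 1 := by
          apply Finset.sum_le_sum
          intro i hi
          rw [Finset.mem_filter, Finset.mem_range] at hi
          have hadj := w.adj_getVert_succ hi.1
          have h1 := gd_term_bounds (hg _ _ hadj)
          have h2 := gd_term_bounds (hg' _ _ hadj)
          rw [abs_le]
          constructor <;> [skip; skip] <;> simp only [ht, ht'] <;> omega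
      _ = T.card := by simp
      _ ≤ 2 := by exact_mod_cast hcard
  have hdvd : (3 : ℤ) ∣ gdD w g - gdD w g' :=
    dvd_sub (gdD_dvd w g) (gdD_dvd w g')
  have := Int.eq_zero_of_abs_lt_dvd hdvd (by omega)
  omega

private lemma gd_swap (π : Equiv.Perm (Fin 3)) (hπ : π.IsSwap) :
    ∀ a b : Fin 3, a ≠ b →
      ((gdc (π b) - gdc (π a)).val : ℤ) = 3 - ((gdc b - gdc a).val : ℤ) := by
  obtain ⟨u, v, huv, rfl⟩ := hπ
  revert huv; revert u v
  suffices h : ∀ u v : Fin 3, u ≠ v → ∀ a b : Fin 3, a ≠ b →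
      ((gdc (Equiv.swap u v b) - gdc (Equiv.swap u v a)).val : ℕ) =
        3 - ((gdc b - gdc a).val : ℕ) by
    intro u v huv a b hab
    have h1 := h u v huv a b hab
    have h2 : (gdc b - gdc a).val ≤ 2 := by
      have := (gdc b - gdc a).val_lt; omega
    omega
  decide

/-- If `G` has an odd cycle and `f` is a proper 3-coloring, then `f` and its
color-class interchange `π ∘ f` (for a transposition `π` of two colors) cannot be
joined by a sequence of proper 3-colorings, each differing from the next on
exactly one vertex. -/
theorem glauber_disconnected {V : Type} [Fintype V] (G : SimpleGraph V)
    (x : V) (w : G.Walk x x) (hw : w.IsCycle) (hodd : Odd w.length)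
    (f : V → Fin 3) (hf : ∀ a b, G.Adj a b → f a ≠ f b)
    (π : Equiv.Perm (Fin 3)) (hπ : π.IsSwap) :
    ¬ ∃ (N : ℕ) (g : ℕ → V → Fin 3),
        g 0 = f ∧ g N = π ∘ f ∧
        (∀ i ≤ N, ∀ a b, G.Adj a b → g i a ≠ g i b) ∧
        (∀ i < N, ∃! y : V, g i y ≠ g (i + 1) y) := by
  rintro ⟨N, g, h0, hN, hproper, hstep⟩
  -- the winding number is constant along the chain
  have hconst : ∀ i ≤ N, gdD w (g i) = gdD w f := by
    intro i hi
    induction i with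
    | zero => rw [h0]
    | succ k ih =>
      have hk : k ≤ N := by omega
      have hk' : k < N := by omega
      obtain ⟨y, _, hy⟩ := hstep k hk'
      have hdiff : ∀ z, z ≠ y → g k z = g (k + 1) z := by
        intro z hz
        by_contra hne
        exact hz (hy z hne)
      have := gdD_step hw (g k) (g (k + 1)) (hproper k hk) (hproper (k + 1) hi)
        y hdiff
      rw [← this, ih hk]
  have h1 : gdD w (π ∘ f) = gdD w f := by rw [← hN]; exact hconst N le_rfl
  -- but the swap flips the winding number
  have h2 : gdD w (π ∘ f) = 3 * (w.length : ℤ) - gdD w f := by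
    unfold gdD
    have hcong : ∀ i ∈ Finset.range w.length,
        ((gdc ((π ∘ f) (w.getVert (i + 1))) - gdc ((π ∘ f) (w.getVert i))).val : ℤ)
          = 3 - ((gdc (f (w.getVert (i + 1))) - gdc (f (w.getVert i))).val : ℤ) := by
      intro i hi
      have hadj := w.adj_getVert_succ (Finset.mem_range.mp hi)
      exact gd_swap π hπ _ _ (hf _ _ hadj)
    rw [Finset.sum_congr rfl hcong, Finset.sum_sub_distrib, Finset.sum_const,
      Finset.card_range]
    simp [nsmul_eq_mul, mul_comm]
  obtain ⟨k, hk⟩ := hodd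
  have hk' : (w.length : ℤ) = 2 * k + 1 := by exact_mod_cast hk
  omega
end

section
/- The 3-dimensional hypercube graph Q_3 admits a proper 4-coloring in which each color class consists of a pair of antipodal vertices, and in this coloring every vertex is adjacent to vertices of all three other colors. Consequently, no single vertex of Q_3 can have its color changed to produce another proper 4-coloring. -/
/-- The 3-cube graph: vertices `{0,1}^3`, adjacent iff they differ in exactly one
coordinate. -/
def Q3 : SimpleGraph (Fin 3 → Bool) where
  Adj x y := ∃! i, x i ≠ y i
  symm := ⟨by rintro x y ⟨i, hi, hu⟩; exact ⟨i, hi.symm, fun j hj => hu j hj.symm⟩⟩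
  loopless := ⟨by rintro x ⟨i, hi, _⟩; exact hi rfl⟩

/-!
The color of a vertex is its antipodal pair. Two adjacent vertices differ in one coordinate and
antipodes differ in all three, so adjacent vertices get different colors; the three neighbours of a
vertex are pairwise at distance two, hence never antipodal, so they carry the three other colors.
A proper recoloring of a single vertex `x` would have to give it one of those colors, which is
already taken by a neighbour whose color did not change.
-/

theorem SimpleGraph.not_existsUnique_ne_of_forall_exists_adj_eq {V α : Type*} {G : SimpleGraph V}
    {c d : V → α} (hc : ∀ x k, k ≠ c x → ∃ y, G.Adj x y ∧ c y = k)
    (hd : ∀ x y, G.Adj x y → d x ≠ d y) : ¬ ∃! x, d x ≠ c x := by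
  rintro ⟨x, hx, hunique⟩
  obtain ⟨y, hxy, hy⟩ := hc x (d x) hx
  have hdy : d y = c y := by_contra fun h => hxy.ne (hunique y h).symm
  exact hd x y hxy (by rw [hdy, hy])

instance : DecidableRel Q3.Adj :=
  fun x y => decidable_of_iff (∃ i, x i ≠ y i ∧ ∀ j, x j ≠ y j → j = i) Iff.rfl

/-- The two binary digits of the color record whether `x 0 ≠ x 2` and whether `x 1 ≠ x 2`; these
are unchanged by complementation and determine `x` up to it. -/
def antipodalColor (x : Fin 3 → Bool) : Fin 4 :=
  (bif x 0 != x 2 then 2 else 0) + (bif x 1 != x 2 then 1 else 0)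

theorem antipodalColor_ne_of_adj : ∀ x y, Q3.Adj x y → antipodalColor x ≠ antipodalColor y := by
  decide

theorem antipodalColor_compl : ∀ x, antipodalColor x = antipodalColor (fun i => !x i) := by
  decide

theorem eq_or_eq_compl_of_antipodalColor_eq :
    ∀ x y, antipodalColor x = antipodalColor y → y = x ∨ y = fun i => !x i := by
  decide

theorem exists_adj_antipodalColor_eq :
    ∀ x (k : Fin 4), k ≠ antipodalColor x → ∃ y, Q3.Adj x y ∧ antipodalColor y = k := by
  decide

/-- `Q_3` has a proper 4-coloring whose color classes are the antipodal pairs; in it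
every vertex sees all three other colors, so no proper 4-coloring differs from it
on exactly one vertex. -/
theorem Q3_antipodal_coloring :
    ∃ c : (Fin 3 → Bool) → Fin 4,
      (∀ x y, Q3.Adj x y → c x ≠ c y) ∧
      (∀ x, c x = c (fun i => !x i)) ∧
      (∀ x y, c x = c y → y = x ∨ y = fun i => !x i) ∧
      (∀ x (k : Fin 4), k ≠ c x → ∃ y, Q3.Adj x y ∧ c y = k) ∧
      (∀ d : (Fin 3 → Bool) → Fin 4,
        (∀ x y, Q3.Adj x y → d x ≠ d y) → ¬ ∃! x, d x ≠ c x) :=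
  ⟨antipodalColor, antipodalColor_ne_of_adj, antipodalColor_compl,
    eq_or_eq_compl_of_antipodalColor_eq, exists_adj_antipodalColor_eq,
    fun _ hd => SimpleGraph.not_existsUnique_ne_of_forall_exists_adj_eq
      exists_adj_antipodalColor_eq hd⟩
end

section
/- If G is a finite connected simple graph containing an odd cycle, then for any proper 3-coloring η of G and any transposition π of two colors, the restriction of η to the odd cycle and the restriction of π∘η to the odd cycle have different return numbers; in particular η and π∘η are distinct proper 3-colorings of G. -/
/-- If a finite connected graph `G` contains an odd cycle, then for any proper
3-coloring `η` and any transposition `π` of two colors, the restrictions of `η` and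
`π ∘ η` to the odd cycle have different return numbers; in particular `π ∘ η ≠ η`. -/
theorem restriction_return_numbers_differ {V : Type} [Fintype V] (G : SimpleGraph V)
    (hconn : G.Connected) (n : ℕ) [NeZero n] (hn : 3 ≤ n) (hodd : Odd n)
    (c : ZMod n → V) (hinj : Function.Injective c)
    (hc : ∀ i : ZMod n, G.Adj (c i) (c (i + 1)))
    (η : V → ZMod 3) (hη : ∀ a b, G.Adj a b → η a ≠ η b)
    (π : Equiv.Perm (ZMod 3)) (hπ : π.IsSwap) :
    (Finset.univ.filter fun i : ZMod n =>
        π (η (c (i + 1))) - π (η (c i)) = -1).card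
      ≠ (Finset.univ.filter fun i : ZMod n => η (c (i + 1)) - η (c i) = -1).card ∧
    π ∘ η ≠ η := by
  obtain ⟨x, y, hxy, rfl⟩ := hπ
  have hswap : ∀ a b : ZMod 3, Equiv.swap x y a - Equiv.swap x y b = b - a := by
    revert hxy; revert y; revert x; decide
  have hd : ∀ i : ZMod n,
      η (c (i + 1)) - η (c i) = 1 ∨ η (c (i + 1)) - η (c i) = -1 := by
    intro i
    have h1 : η (c (i + 1)) - η (c i) ≠ 0 := by
      intro h
      exact hη _ _ (hc i) (sub_eq_zero.mp h).symm
    revert h1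
    generalize η (c (i + 1)) - η (c i) = d
    revert d; decide
  have hfe : (Finset.univ.filter fun i : ZMod n =>
        Equiv.swap x y (η (c (i + 1))) - Equiv.swap x y (η (c i)) = -1)
      = Finset.univ.filter fun i : ZMod n =>
        ¬ (η (c (i + 1)) - η (c i) = -1) := by
    apply Finset.filter_congr
    intro i _
    rw [hswap]
    have := hd i
    constructor
    · intro h h'
      have h2 : η (c i) - η (c (i + 1)) = 1 := by
        have := congrArg Neg.neg h'
        simpa [neg_sub] using this
      rw [h2] at h
      exact absurd h (by decide)
    · intro h
      rcases this with h1 | h1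
      · have : η (c i) - η (c (i + 1)) = -1 := by
          have := congrArg Neg.neg h1
          simpa [neg_sub] using this
        exact this
      · exact absurd h1 h
  have hcards : (Finset.univ.filter fun i : ZMod n =>
        ¬ (η (c (i + 1)) - η (c i) = -1)).card
      + (Finset.univ.filter fun i : ZMod n =>
        η (c (i + 1)) - η (c i) = -1).card = n := by
    rw [add_comm, Finset.card_filter_add_card_filter_not]
    simp [ZMod.card]
  have main : (Finset.univ.filter fun i : ZMod n =>
        Equiv.swap x y (η (c (i + 1))) - Equiv.swap x y (η (c i)) = -1).card
      ≠ (Finset.univ.filter fun i : ZMod n => η (c (i + 1)) - η (c i) = -1).card := by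
    rw [hfe]
    intro h
    rw [h] at hcards
    exact (Nat.not_even_iff_odd.mpr hodd) ⟨_, hcards.symm⟩
  refine ⟨main, ?_⟩
  intro h
  apply main
  congr 1
  ext i
  simp only [Finset.mem_filter, Finset.mem_univ, true_and]
  simp only [show ∀ v, Equiv.swap x y (η v) = η v from fun v => congrFun h v]
end
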